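/- Let A = {A_x}_{x∈Ω_A} be an observable on ℂ^d that admits a repeatable instrument, with all effects A_x nonzero. If |Ω_A| = d, then A is sharp, i.e. every effect A_x is an orthogonal projection (in fact a one-dimensional projection). -/

import Mathlib

open Matrix
open scoped BigOperators ComplexOrder

private lemma sum_mulVec' {d : ℕ} {ι : Type*} (s : Finset ι)
    (M : ι → Matrix (Fin d) (Fin d) ℂ) (v : Fin d → ℂ) :
    (∑ i ∈ s, M i) *ᵥ v = ∑ i ∈ s, M i *ᵥ v := by
  ext j
  simp only [Matrix.mulVec, dotProduct, Finset.sum_apply, Matrix.sum_apply,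
    Finset.sum_mul]
  exact Finset.sum_comm

private lemma dotProduct_sum' {d : ℕ} {ι : Type*} (s : Finset ι)
    (w : Fin d → ℂ) (u : ι → Fin d → ℂ) :
    w ⬝ᵥ (∑ i ∈ s, u i) = ∑ i ∈ s, w ⬝ᵥ u i := by
  simp [dotProduct, Finset.sum_apply, Finset.mul_sum]
  exact Finset.sum_comm

private lemma psd_sum' {d : ℕ} {ι : Type*} (s : Finset ι)
    (M : ι → Matrix (Fin d) (Fin d) ℂ)
    (h : ∀ i ∈ s, (M i).PosSemidef) : (∑ i ∈ s, M i).PosSemidef := by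
  refine Matrix.PosSemidef.of_dotProduct_mulVec_nonneg ?_ ?_
  · show (∑ i ∈ s, M i)ᴴ = _
    rw [Matrix.conjTranspose_sum]
    exact Finset.sum_congr rfl fun i hi => (h i hi).1
  · intro v
    rw [sum_mulVec', dotProduct_sum']
    exact Finset.sum_nonneg fun i hi => (h i hi).dotProduct_mulVec_nonneg v

/-- If an observable on `ℂ^d` (with nonzero effects) admits a repeatable instrument and
has exactly `d` outcomes, then it is sharp: every effect is an orthogonal projection
(in fact a one-dimensional one). -/
theorem repeatable_card_eq_dim_sharp
    {d : ℕ} {ΩA : Type*} [Fintype ΩA]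
    (A : ΩA → Matrix (Fin d) (Fin d) ℂ)
    (hA : ∀ x, (A x).PosSemidef) (hAsum : ∑ x, A x = 1) (hA0 : ∀ x, A x ≠ 0)
    (hrep : ∃ (n : ℕ) (K : ΩA → Fin n → Matrix (Fin d) (Fin d) ℂ),
      (∀ x, ∑ α, (K x α)ᴴ * K x α = A x) ∧
      (∀ x y, x ≠ y → ∑ α, (K x α)ᴴ * A y * K x α = 0))
    (hcard : Fintype.card ΩA = d) :
    ∀ x, (A x).IsHermitian ∧ A x * A x = A x ∧ (A x).trace = 1 := by
  classical
  obtain ⟨n, K, hK, hKrep⟩ := hrep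
  -- the complement of each effect is positive semidefinite
  have hcompl : ∀ x, ((1 : Matrix (Fin d) (Fin d) ℂ) - A x).PosSemidef := by
    intro x
    have h1 : (1 : Matrix (Fin d) (Fin d) ℂ) - A x
        = ∑ y ∈ Finset.univ.erase x, A y := by
      rw [Finset.sum_erase_eq_sub (Finset.mem_univ x), hAsum]
    rw [h1]
    exact psd_sum' _ _ fun y _ => hA y
  -- each effect has a nonzero eigenvector with eigenvalue 1
  have hex : ∀ x, ∃ u : Fin d → ℂ, u ≠ 0 ∧ A x *ᵥ u = u := by
    intro x
    have hw : ∃ w, A x *ᵥ w ≠ 0 := by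
      by_contra h
      push_neg at h
      apply hA0 x
      ext i j
      have := congrFun (h (Pi.single j 1)) i
      simpa using this
    obtain ⟨w, hw⟩ := hw
    have hKw : ∃ α, K x α *ᵥ w ≠ 0 := by
      by_contra h
      push_neg at h
      apply hw
      rw [← hK x, sum_mulVec']
      refine Finset.sum_eq_zero fun α _ => ?_
      rw [← Matrix.mulVec_mulVec, h α, Matrix.mulVec_zero]
    obtain ⟨α, hα⟩ := hKw
    refine ⟨K x α *ᵥ w, hα, ?_⟩
    -- the sum of conjugated complements vanishes
    have h2 : ∑ β, (K x β)ᴴ * A x * (K x β) = A x := by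
      have h3 : ∑ y, ∑ β, (K x β)ᴴ * A y * (K x β) = A x := by
        rw [Finset.sum_comm]
        calc ∑ β, ∑ y, (K x β)ᴴ * A y * K x β
            = ∑ β, (K x β)ᴴ * K x β := by
              refine Finset.sum_congr rfl fun β _ => ?_
              rw [← Finset.sum_mul, ← Finset.mul_sum, hAsum, Matrix.mul_one]
          _ = A x := hK x
      exact (Finset.sum_eq_single_of_mem x (Finset.mem_univ x)
        fun y _ hyx => hKrep x y (Ne.symm hyx)).symm.trans h3
    have hsum0 : ∑ β, (K x β)ᴴ * (1 - A x) * (K x β) = 0 := by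
      have : ∀ β, (K x β)ᴴ * (1 - A x) * (K x β)
          = (K x β)ᴴ * K x β - (K x β)ᴴ * A x * K x β := by
        intro β
        rw [Matrix.mul_sub, Matrix.mul_one, Matrix.sub_mul]
      simp only [this, Finset.sum_sub_distrib, hK x, h2, sub_self]
    -- each summand is nonnegative, hence zero
    have hterm : ∀ β, star w ⬝ᵥ ((K x β)ᴴ * (1 - A x) * K x β) *ᵥ w = 0 := by
      have htot : ∑ β, star w ⬝ᵥ ((K x β)ᴴ * (1 - A x) * K x β) *ᵥ w = 0 := by
        rw [← dotProduct_sum', ← sum_mulVec', hsum0, Matrix.zero_mulVec,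
          dotProduct_zero]
      have hnn : ∀ β ∈ Finset.univ, (0:ℂ) ≤ star w ⬝ᵥ ((K x β)ᴴ * (1 - A x) * K x β) *ᵥ w :=
        fun β _ => ((hcompl x).conjTranspose_mul_mul_same (K x β)).dotProduct_mulVec_nonneg w
      intro β
      exact (Finset.sum_eq_zero_iff_of_nonneg hnn).mp htot β (Finset.mem_univ β)
    have hq : star (K x α *ᵥ w) ⬝ᵥ (1 - A x) *ᵥ (K x α *ᵥ w) = 0 := by
      simpa only [star_mulVec, Matrix.dotProduct_mulVec, Matrix.vecMul_vecMul]
        using hterm α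
    have hz := ((hcompl x).dotProduct_mulVec_zero_iff _).mp hq
    rw [Matrix.sub_mulVec, Matrix.one_mulVec, sub_eq_zero] at hz
    exact hz.symm
  choose v hv0 hva using hex
  -- eigenvectors of distinct effects are annihilated by the other effects
  have hzero : ∀ x y, y ≠ x → A y *ᵥ v x = 0 := by
    intro x y hyx
    have h1 : (∑ z ∈ Finset.univ.erase x, A z) *ᵥ v x = 0 := by
      rw [Finset.sum_erase_eq_sub (Finset.mem_univ x), hAsum, Matrix.sub_mulVec,
        Matrix.one_mulVec, hva x, sub_self]
    have htot : ∑ z ∈ Finset.univ.erase x, star (v x) ⬝ᵥ A z *ᵥ v x = 0 := by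
      rw [← dotProduct_sum', ← sum_mulVec', h1, dotProduct_zero]
    have hnn : ∀ z ∈ Finset.univ.erase x, (0:ℂ) ≤ star (v x) ⬝ᵥ A z *ᵥ v x :=
      fun z _ => (hA z).dotProduct_mulVec_nonneg (v x)
    have := (Finset.sum_eq_zero_iff_of_nonneg hnn).mp htot y
      (Finset.mem_erase.mpr ⟨hyx, Finset.mem_univ y⟩)
    exact ((hA y).dotProduct_mulVec_zero_iff (v x)).mp this
  -- the eigenvectors are mutually orthogonal
  have horth : ∀ x y, x ≠ y → star (v x) ⬝ᵥ v y = 0 := by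
    intro x y hxy
    have h1 : A y *ᵥ v x = 0 := hzero x y (Ne.symm hxy)
    have h2 : star (v x) ᵥ* A y = 0 := by
      have : star (A y *ᵥ v x) = star (v x) ᵥ* (A y)ᴴ := star_mulVec _ _
      rw [h1, (hA y).1] at this
      simpa using this.symm
    calc star (v x) ⬝ᵥ v y = star (v x) ⬝ᵥ (A y *ᵥ v y) := by rw [hva y]
      _ = (star (v x) ᵥ* A y) ⬝ᵥ v y := Matrix.dotProduct_mulVec _ _ _
      _ = 0 := by rw [h2, zero_dotProduct]
  -- linear independence
  have hli : LinearIndependent ℂ v := by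
    rw [Fintype.linearIndependent_iff]
    intro c hc y
    have h1 : star (v y) ⬝ᵥ (∑ x, c x • v x) = c y * (star (v y) ⬝ᵥ v y) := by
      rw [dotProduct_sum']
      rw [Finset.sum_eq_single_of_mem y (Finset.mem_univ y)]
      · rw [dotProduct_smul, smul_eq_mul]
      · intro x _ hxy
        rw [dotProduct_smul, horth y x (Ne.symm hxy), smul_zero]
    rw [hc, dotProduct_zero] at h1
    have h2 : star (v y) ⬝ᵥ v y ≠ 0 := fun h => hv0 y (dotProduct_star_self_eq_zero.mp h)
    exact (mul_eq_zero.mp h1.symm).resolve_right h2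
  intro x
  haveI : Nonempty ΩA := ⟨x⟩
  have hfr : Fintype.card ΩA = Module.finrank ℂ (Fin d → ℂ) := by
    rw [hcard, Module.finrank_fin_fun]
  let b : Module.Basis ΩA ℂ (Fin d → ℂ) := basisOfLinearIndependentOfCardEqFinrank hli hfr
  have hb : ⇑b = v := coe_basisOfLinearIndependentOfCardEqFinrank hli hfr
  have hact : ∀ y z, A y *ᵥ v z = if y = z then v z else 0 := by
    intro y z
    by_cases h : y = z
    · subst h; simp [hva y]
    · simp [h, hzero z y h]
  refine ⟨(hA x).1, ?_, ?_⟩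
  · -- idempotency
    have hmaps : (A x * A x).mulVecLin = (A x).mulVecLin := by
      apply Module.Basis.ext b
      intro y
      have hby : b y = v y := congrFun hb y
      simp only [Matrix.mulVecLin_apply, hby, ← Matrix.mulVec_mulVec, hact]
      by_cases h : x = y <;> simp [h, hact]
    ext i j
    have := congrFun (congrArg (fun f : (Fin d → ℂ) →ₗ[ℂ] (Fin d → ℂ) => f (Pi.single j 1))
      hmaps) i
    simpa [Matrix.mulVecLin_apply, Matrix.mul_apply, Matrix.mulVec, dotProduct, Pi.single_apply] using this
  · -- trace
    have h1 : (A x).trace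
        = Matrix.trace (LinearMap.toMatrix b b (Matrix.toLin' (A x))) := by
      rw [← LinearMap.trace_eq_matrix_trace,
        LinearMap.trace_eq_matrix_trace ℂ (Pi.basisFun ℂ (Fin d)),
        LinearMap.toMatrix_eq_toMatrix', LinearMap.toMatrix'_toLin']
    have h2 : ∀ y, LinearMap.toMatrix b b (Matrix.toLin' (A x)) y y
        = if y = x then 1 else 0 := by
      intro y
      rw [LinearMap.toMatrix_apply, Matrix.toLin'_apply]
      have hby : b y = v y := congrFun hb y
      rw [hby, hact x y]
      by_cases h : y = x
      · subst h
        rw [if_pos rfl, ← hby, b.repr_self]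
        simp
      · rw [if_neg (fun hxy => h hxy.symm), if_neg h]
        simp
    rw [h1, Matrix.trace]
    simp only [Matrix.diag, h2]
    simp
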